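/- arXiv:2603.05482 — 8 statements merged into one kernel-verified Lean document; each statement's English description precedes it below -/
import Mathlib

section
/- Let b = (b_1,...,b_d) be a vector of positive integers with even sum 2β, and let P_b = [0,1]^{d+2} ∩ {x : ∑_{i=1}^d b_i x_i - β x_{d+1} + (β+1/2) x_{d+2} ≤ β + 1/4}. Then P_b is a simple polytope of dimension d+2, i.e., P_b is full-dimensional and every vertex of P_b satisfies exactly d+2 of the defining inequalities with equality. -/
/-!
At a vertex `x` of `[0,1]ⁿ ∩ {w ⬝ᵥ x ≤ c}` at most one coordinate is fractional: two fractional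
coordinates `j, k` leave room to move along a nonzero direction supported on `{j, k}` and
orthogonal to `w`. A single fractional coordinate forces the knapsack inequality to be tight, for
otherwise that coordinate alone could move. So a vertex is either a 0/1 point, or has `n - 1`
coordinates in `{0, 1}` and lies on the hyperplane `w ⬝ᵥ x = c`. For `P_b` the weights are
half-integers while `c = β + 1/4` is not, so no 0/1 point lies on the hyperplane, and in both cases
exactly `n` inequalities are tight.
-/

open Filter Topology Finset

theorem eq_zero_of_add_mem_of_sub_mem {𝕜 E : Type*} [Field 𝕜] [LinearOrder 𝕜]
    [IsStrictOrderedRing 𝕜] [AddCommGroup E] [Module 𝕜 E] {A : Set E} {x v : E}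
    (hx : x ∈ A.extremePoints 𝕜) (hadd : x + v ∈ A) (hsub : x - v ∈ A) : v = 0 := by
  have hmid : x ∈ openSegment 𝕜 (x + v) (x - v) :=
    ⟨1 / 2, 1 / 2, by norm_num, by norm_num, by norm_num, by module⟩
  simpa using hx.2 hadd hsub hmid

section CubeKnapsack

variable {ι : Type*} [Fintype ι] {w x : ι → ℝ} {c : ℝ}

def cubeKnapsack (w : ι → ℝ) (c : ℝ) : Set (ι → ℝ) :=
  {x | (∀ i, 0 ≤ x i ∧ x i ≤ 1) ∧ w ⬝ᵥ x ≤ c}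

theorem mem_interior_cubeKnapsack (hx : ∀ i, x i ∈ Set.Ioo 0 1)
    (hc : w ⬝ᵥ x < c) : x ∈ interior (cubeKnapsack w c) := by
  rw [mem_interior_iff_mem_nhds]
  have hcoord : ∀ i, ∀ᶠ y in 𝓝 x, y i ∈ Set.Ioo (0 : ℝ) 1 := fun i =>
    ((continuous_apply i).tendsto x).eventually (isOpen_Ioo.mem_nhds (hx i))
  have hknap : ∀ᶠ y in 𝓝 x, w ⬝ᵥ y < c :=
    ((continuous_const.dotProduct continuous_id).tendsto x).eventually (gt_mem_nhds hc)
  filter_upwards [eventually_all.2 hcoord, hknap] with y hy hy'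
  exact ⟨fun i => ⟨(hy i).1.le, (hy i).2.le⟩, hy'.le⟩

theorem eventually_add_smul_mem_cubeKnapsack {v : ι → ℝ}
    (hx : x ∈ cubeKnapsack w c) (hv : ∀ i, v i ≠ 0 → x i ∈ Set.Ioo 0 1)
    (hslack : w ⬝ᵥ v = 0 ∨ w ⬝ᵥ x < c) :
    ∀ᶠ t in 𝓝 (0 : ℝ), x + t • v ∈ cubeKnapsack w c := by
  have hline : Tendsto (fun t : ℝ => x + t • v) (𝓝 0) (𝓝 x) := by
    simpa using tendsto_const_nhds.add ((tendsto_id (x := 𝓝 (0 : ℝ))).smul_const v)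
  refine (eventually_all.2 fun i => ?_).and ?_
  · by_cases hvi : v i = 0
    · exact .of_forall fun t => by simpa [hvi] using hx.1 i
    · filter_upwards [(((continuous_apply i).tendsto x).comp hline).eventually
        (isOpen_Ioo.mem_nhds (hv i hvi))] with t ht
      exact ⟨ht.1.le, ht.2.le⟩
  · rcases hslack with h | h
    · exact .of_forall fun t => by simpa [dotProduct_add, h] using hx.2
    · filter_upwards [(((continuous_const.dotProduct continuous_id).tendsto x).comp
        hline).eventually (gt_mem_nhds h)] with t ht
      exact ht.le

theorem eq_zero_of_mem_extremePoints_cubeKnapsack {v : ι → ℝ}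
    (hx : x ∈ (cubeKnapsack w c).extremePoints ℝ) (hv : ∀ i, v i ≠ 0 → x i ∈ Set.Ioo 0 1)
    (hslack : w ⬝ᵥ v = 0 ∨ w ⬝ᵥ x < c) : v = 0 := by
  obtain ⟨ε, hε, hball⟩ :=
    Metric.eventually_nhds_iff.1 (eventually_add_smul_mem_cubeKnapsack hx.1 hv hslack)
  have hsmall : ∀ t : ℝ, |t| = ε / 2 → x + t • v ∈ cubeKnapsack w c := fun t ht =>
    hball (by rw [Real.dist_0_eq_abs, ht]; linarith)
  have hadd := hsmall (ε / 2) (abs_of_pos (by positivity))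
  have hsub := hsmall (-(ε / 2)) (by rw [abs_neg, abs_of_pos (by positivity)])
  rw [neg_smul, ← sub_eq_add_neg] at hsub
  exact (smul_eq_zero.1 (eq_zero_of_add_mem_of_sub_mem hx hadd hsub)).resolve_left
    (by positivity)

theorem ne_zero_and_dotProduct_eq_of_mem_extremePoints_cubeKnapsack
    (hx : x ∈ (cubeKnapsack w c).extremePoints ℝ) {j : ι} (hj : x j ∈ Set.Ioo 0 1) :
    w j ≠ 0 ∧ w ⬝ᵥ x = c := by
  classical
  have hstuck : ¬(w j = 0 ∨ w ⬝ᵥ x < c) := fun hslack => by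
    have hsingle := eq_zero_of_mem_extremePoints_cubeKnapsack (v := Pi.single j 1) hx
      (fun i hi => by rwa [of_not_not fun h => hi (Pi.single_eq_of_ne h _)])
      (hslack.imp (by simp [·]) id)
    simpa using congrFun hsingle j
  push Not at hstuck
  exact ⟨hstuck.1, le_antisymm hx.1.2 hstuck.2⟩

theorem eq_of_mem_extremePoints_cubeKnapsack
    (hx : x ∈ (cubeKnapsack w c).extremePoints ℝ) {j k : ι}
    (hj : x j ∈ Set.Ioo 0 1) (hk : x k ∈ Set.Ioo 0 1) : j = k := by
  classical
  by_contra hjk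
  have hwj := (ne_zero_and_dotProduct_eq_of_mem_extremePoints_cubeKnapsack hx hj).1
  have hpair := eq_zero_of_mem_extremePoints_cubeKnapsack
    (v := Pi.single j (w k) - Pi.single k (w j)) hx
    (fun i hi => by
      by_cases hij : i = j
      · rwa [hij]
      by_cases hik : i = k
      · rwa [hik]
      simp [hij, hik] at hi)
    (Or.inl (by simp [dotProduct_sub, mul_comm]))
  simpa [hjk, hwj] using congrFun hpair k

open Classical in
theorem card_tight_of_mem_extremePoints_cubeKnapsack
    (hc : ∀ y : ι → ℝ, (∀ i, y i = 0 ∨ y i = 1) → w ⬝ᵥ y ≠ c)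
    (hx : x ∈ (cubeKnapsack w c).extremePoints ℝ) :
    #{i | x i = 0} + #{i | x i = 1} + (if w ⬝ᵥ x = c then 1 else 0) = Fintype.card ι := by
  have hzero_one : #{i | x i = 0} + #{i | x i = 1} = #{i | x i = 0 ∨ x i = 1} := by
    rw [filter_or,
      card_union_of_disjoint (disjoint_filter.2 fun i _ h0 h1 => by simp [h0] at h1)]
  rw [hzero_one]
  by_cases hint : ∀ i, x i = 0 ∨ x i = 1
  · rw [if_neg (hc x hint), filter_true_of_mem fun i _ => hint i, card_univ, add_zero]
  · push Not at hint
    obtain ⟨j, hj0, hj1⟩ := hint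
    have hfrac : ∀ i, x i ≠ 0 → x i ≠ 1 → x i ∈ Set.Ioo 0 1 := fun i h0 h1 =>
      ⟨(hx.1.1 i).1.lt_of_ne' h0, (hx.1.1 i).2.lt_of_ne h1⟩
    have hj := hfrac j hj0 hj1
    have hother : ∀ i ≠ j, x i = 0 ∨ x i = 1 := fun i hij => by
      by_contra h
      push Not at h
      exact hij (eq_of_mem_extremePoints_cubeKnapsack hx (hfrac i h.1 h.2) hj)
    have herase : ({i | x i = 0 ∨ x i = 1} : Finset ι) = univ.erase j := by
      ext i
      by_cases hij : i = j <;> simp [hij, hj0, hj1, hother]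
    rw [herase, card_erase_of_mem (mem_univ j), card_univ,
      if_pos (ne_zero_and_dotProduct_eq_of_mem_extremePoints_cubeKnapsack hx hj).2]
    have := Fintype.card_pos_iff.2 ⟨j⟩
    omega

end CubeKnapsack

theorem dotProduct_ne_add_quarter_of_half_integer {ι : Type*} [Fintype ι] {w y : ι → ℝ}
    {m : ι → ℤ} (hm : ∀ i, w i = m i / 2) (hy : ∀ i, y i = 0 ∨ y i = 1) (β : ℤ) :
    w ⬝ᵥ y ≠ β + 1 / 4 := by
  have hyint : ∀ i, ∃ z : ℤ, y i = z := fun i =>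
    (hy i).elim (fun h => ⟨0, by simp [h]⟩) (fun h => ⟨1, by simp [h]⟩)
  choose z hz using hyint
  have hdot : w ⬝ᵥ y = ((∑ i, m i * z i : ℤ) : ℝ) / 2 := by
    simp only [dotProduct, hm, hz, Int.cast_sum, Int.cast_mul, sum_div]
    exact sum_congr rfl fun i _ => by ring
  intro h
  rw [hdot] at h
  have hodd : ((2 * ∑ i, m i * z i : ℤ) : ℝ) = ((4 * β + 1 : ℤ) : ℝ) := by
    push_cast at h ⊢
    linarith
  exact absurd (Int.cast_injective hodd) (by omega)

open Classical in
/-- the fractional knapsack polytope `P_b` is full-dimensional of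
dimension `d+2` and simple: every vertex (extreme point) satisfies exactly `d+2`
of the `2(d+2)+1` defining inequalities with equality. -/
theorem Pb_simple (d : ℕ) (b : Fin d → ℤ) (hb : ∀ i, 0 < b i)
    (β : ℤ) (hβ : ∑ i, b i = 2 * β)
    (w : Fin (d + 2) → ℝ)
    (hw : ∀ i : Fin (d + 2), w i =
      if h : (i : ℕ) < d then (b ⟨i, h⟩ : ℝ)
      else if (i : ℕ) = d then -(β : ℝ) else (β : ℝ) + 1/2)
    (P : Set (Fin (d + 2) → ℝ))
    (hP : P = {x | (∀ i, 0 ≤ x i ∧ x i ≤ 1) ∧ ∑ i, w i * x i ≤ (β : ℝ) + 1/4}) :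
    (interior P).Nonempty ∧
    ∀ x ∈ Set.extremePoints ℝ P,
      ((Finset.univ.filter fun i : Fin (d + 2) => x i = 0).card
        + (Finset.univ.filter fun i : Fin (d + 2) => x i = 1).card
        + (if ∑ i, w i * x i = (β : ℝ) + 1/4 then 1 else 0)) = d + 2 := by
  replace hP : P = cubeKnapsack w (β + 1 / 4) := hP
  subst hP
  have hβ_nonneg : (0 : ℝ) ≤ β := by
    have := sum_nonneg fun i (_ : i ∈ univ) => (hb i).le
    exact_mod_cast (by omega : 0 ≤ β)
  obtain ⟨m, hm⟩ : ∃ m : Fin (d + 2) → ℤ, ∀ i, w i = m i / 2 :=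
    ⟨fun i => if h : (i : ℕ) < d then 2 * b ⟨i, h⟩
        else if (i : ℕ) = d then -2 * β else 2 * β + 1,
      fun i => by dsimp only; rw [hw i]; split_ifs <;> push_cast <;> ring⟩
  refine ⟨⟨fun _ => 1 / 4, mem_interior_cubeKnapsack (fun _ => by norm_num) ?_⟩, fun x hx => ?_⟩
  · have hbR : ∑ i, (b i : ℝ) = 2 * β := by exact_mod_cast hβ
    have hsum : ∑ i, w i = 2 * β + 1 / 2 := by simp [Fin.sum_univ_castSucc, hw, hbR]
    rw [dotProduct, ← sum_mul, hsum]
    linarith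
  · exact (card_tight_of_mem_extremePoints_cubeKnapsack
      (fun y hy => dotProduct_ne_add_quarter_of_half_integer hm hy β) hx).trans
      (Fintype.card_fin _)
end

section
/- Let w ∈ ℝ^n and c ∈ ℝ, and let Q = [0,1]^n ∩ {x : w·x ≤ c}. Suppose no 0/1 vector x satisfies w·x = c. Then the vertex set of Q equals V_1 ∪ V_2, where V_1 = {e_S : S ⊆ [n], ∑_{i∈S} w_i ≤ c} and V_2 consists of all points e_S + ((c - ∑_{i∈S} w_i)/w_k) e_k for which either ∑_{i∈S} w_i < c < ∑_{i∈S∪{k}} w_i or ∑_{i∈S} w_i > c > ∑_{i∈S∪{k}} w_i (with k ∉ S). -/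
private lemma combo_zero' {a b p q : ℝ} (ha : 0 < a) (hb : 0 < b)
    (hp : 0 ≤ p) (hq : 0 ≤ q) (h : a * p + b * q = 0) : p = 0 ∧ q = 0 := by
  constructor <;> nlinarith

private lemma combo_one' {a b p q : ℝ} (ha : 0 < a) (hb : 0 < b) (hab : a + b = 1)
    (hp : p ≤ 1) (hq : q ≤ 1) (h : a * p + b * q = 1) : p = 1 ∧ q = 1 := by
  constructor <;> nlinarith

private lemma sum_indicator' {n : ℕ} (w : Fin n → ℝ) (S : Finset (Fin n)) :
    ∑ i, w i * (if i ∈ S then (1:ℝ) else 0) = ∑ i ∈ S, w i := by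
  simp [mul_ite, Finset.sum_ite_mem]

private lemma not_extreme_of_pert' {n : ℕ} {s : Set (Fin n → ℝ)} {x d : Fin n → ℝ}
    (hd : d ≠ 0) (h1 : x + d ∈ s) (h2 : x - d ∈ s) :
    x ∉ Set.extremePoints ℝ s := by
  intro hx
  rw [mem_extremePoints] at hx
  have h := (hx.2 (x + d) h1 (x - d) h2
    ⟨1/2, 1/2, by norm_num, by norm_num, by norm_num, by module⟩).1
  apply hd
  have : d = (x + d) - x := by abel
  rw [this, h]; abel

private lemma pert_mem' {n : ℕ} {w : Fin n → ℝ} {c : ℝ} {x : Fin n → ℝ}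
    (hbox : ∀ i, 0 ≤ x i ∧ x i ≤ 1) (d : Fin n → ℝ)
    (hbd : ∀ i, |d i| ≤ min (x i) (1 - x i))
    (hw : ∑ i, w i * d i ≤ c - ∑ i, w i * x i) :
    (x + d) ∈ {x : Fin n → ℝ | (∀ i, 0 ≤ x i ∧ x i ≤ 1) ∧ ∑ i, w i * x i ≤ c} := by
  constructor
  · intro i
    obtain ⟨hA, hB⟩ := abs_le.1 (hbd i)
    have h4 : min (x i) (1 - x i) ≤ x i := min_le_left _ _
    have h5 : min (x i) (1 - x i) ≤ 1 - x i := min_le_right _ _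
    have h6 := min_le_iff.1 h4
    constructor
    · simp only [Pi.add_apply]; linarith [(hbox i).1]
    · simp only [Pi.add_apply]; linarith [(hbox i).2]
  · have h : ∑ i, w i * (x + d) i = ∑ i, w i * x i + ∑ i, w i * d i := by
      simp only [Pi.add_apply, mul_add]
      rw [Finset.sum_add_distrib]
    show ∑ i, w i * (x + d) i ≤ c
    rw [h]; linarith

private lemma not_extreme_dir {n : ℕ} {w : Fin n → ℝ} {c : ℝ} {x : Fin n → ℝ}
    (hbox : ∀ i, 0 ≤ x i ∧ x i ≤ 1)
    (hx : x ∈ Set.extremePoints ℝ {x : Fin n → ℝ | (∀ i, 0 ≤ x i ∧ x i ≤ 1) ∧ ∑ i, w i * x i ≤ c})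
    (d : Fin n → ℝ) (hd : d ≠ 0) (hbd : ∀ i, |d i| ≤ min (x i) (1 - x i))
    (hsum : |∑ i, w i * d i| ≤ c - ∑ i, w i * x i) : False := by
  rw [abs_le] at hsum
  refine not_extreme_of_pert' hd (pert_mem' hbox d hbd hsum.2) ?_ hx
  have h1 : x - d = x + (-d) := by abel
  rw [h1]
  refine pert_mem' hbox (-d) (fun i => by simpa using hbd i) ?_
  have h2 : ∑ i, w i * (-d) i = -∑ i, w i * d i := by
    simp [mul_comm, ← Finset.sum_neg_distrib]
  rw [h2]; linarith [hsum.1]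

/-- vertex description of a hypercube sliced by one halfspace,
assuming no 0/1 point lies on the hyperplane `w·x = c`. -/
theorem sliced_cube_vertices (n : ℕ) (w : Fin n → ℝ) (c : ℝ)
    (Q : Set (Fin n → ℝ))
    (hQ : Q = {x | (∀ i, 0 ≤ x i ∧ x i ≤ 1) ∧ ∑ i, w i * x i ≤ c})
    (hgen : ∀ S : Finset (Fin n), ∑ i ∈ S, w i ≠ c)
    (eS : Finset (Fin n) → (Fin n → ℝ))
    (heS : ∀ S i, eS S i = if i ∈ S then 1 else 0)
    (V₁ V₂ : Set (Fin n → ℝ))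
    (hV₁ : V₁ = {x | ∃ S : Finset (Fin n), (∑ i ∈ S, w i) ≤ c ∧ x = eS S})
    (hV₂ : V₂ = {x | ∃ (S : Finset (Fin n)) (k : Fin n), k ∉ S ∧
      ((∑ i ∈ S, w i < c ∧ c < ∑ i ∈ S ∪ {k}, w i) ∨
        (∑ i ∈ S, w i > c ∧ c > ∑ i ∈ S ∪ {k}, w i)) ∧
      x = eS S + ((c - ∑ i ∈ S, w i) / w k) • eS {k}}) :
    Set.extremePoints ℝ Q = V₁ ∪ V₂ := by
  subst hQ hV₁ hV₂
  ext x
  simp only [Set.mem_union, Set.mem_setOf_eq]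
  constructor
  · -- forward
    intro hx
    obtain ⟨hbox, hle⟩ := hx.1
    by_cases hfrac : ∀ i, x i = 0 ∨ x i = 1
    · left
      refine ⟨Finset.univ.filter (fun i => x i = 1), ?_, ?_⟩
      · have hx' : ∑ i ∈ Finset.univ.filter (fun i => x i = 1), w i = ∑ i, w i * x i := by
          rw [← sum_indicator' w]
          refine Finset.sum_congr rfl fun i _ => ?_
          rcases hfrac i with h | h <;> simp [h]
        linarith
      · funext i
        rw [heS]
        rcases hfrac i with h | h <;> simp [h]
    · push_neg at hfrac
      obtain ⟨k, hk0, hk1⟩ := hfrac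
      have hk0' : 0 < x k := lt_of_le_of_ne (hbox k).1 (Ne.symm hk0)
      have hk1' : x k < 1 := lt_of_le_of_ne (hbox k).2 hk1
      rcases lt_or_eq_of_le hle with hlt | heq
      · -- strict slack: contradiction
        exfalso
        set ε := min (min (x k) (1 - x k)) ((c - ∑ i, w i * x i)/(|w k| + 1)) with hε
        have hwk1 : (0:ℝ) < |w k| + 1 := by positivity
        have hεpos : 0 < ε :=
          lt_min (lt_min hk0' (by linarith)) (div_pos (by linarith) hwk1)
        refine not_extreme_dir hbox hx (fun i => if i = k then ε else 0) ?_ ?_ ?_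
        · intro h
          have h2 : (if k = k then ε else 0 : ℝ) = 0 := congr_fun h k
          rw [if_pos rfl] at h2
          exact absurd h2 (ne_of_gt hεpos)
        · intro i
          show |(if i = k then ε else 0 : ℝ)| ≤ _
          by_cases h : i = k
          · subst h
            rw [if_pos rfl, abs_of_pos hεpos]
            exact min_le_left _ _
          · rw [if_neg h, abs_zero]
            exact le_min (hbox i).1 (by linarith [(hbox i).2])
        · have h3 : ∑ i, w i * (if i = k then ε else 0) = w k * ε := by
            simp [mul_ite]
          rw [h3, abs_mul, abs_of_pos hεpos]
          have h1 : ε ≤ (c - ∑ i, w i * x i)/(|w k| + 1) := min_le_right _ _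
          have h4 : ε * (|w k| + 1) ≤ c - ∑ i, w i * x i := (le_div_iff₀ hwk1).1 h1
          nlinarith [abs_nonneg (w k)]
      · -- tight case
        have hnz : ∀ j, 0 < x j → x j < 1 → w j ≠ 0 := by
          intro j hj0 hj1 hwj
          set δ := min (x j) (1 - x j) with hδ
          have hδpos : 0 < δ := lt_min hj0 (by linarith)
          refine not_extreme_dir hbox hx (fun i => if i = j then δ else 0) ?_ ?_ ?_
          · intro h
            have h2 : (if j = j then δ else 0 : ℝ) = 0 := congr_fun h j
            rw [if_pos rfl] at h2
            exact absurd h2 (ne_of_gt hδpos)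
          · intro i
            show |(if i = j then δ else 0 : ℝ)| ≤ _
            by_cases h : i = j
            · subst h; rw [if_pos rfl, abs_of_pos hδpos]
            · rw [if_neg h, abs_zero]
              exact le_min (hbox i).1 (by linarith [(hbox i).2])
          · have h3 : ∑ i, w i * (if i = j then δ else 0) = w j * δ := by
              simp [mul_ite]
            rw [h3, hwj, heq]
            simp
        have hwk : w k ≠ 0 := hnz k hk0' hk1'
        have hone : ∀ j, j ≠ k → x j = 0 ∨ x j = 1 := by
          intro j hjk
          by_contra hj
          push_neg at hj
          have hj0 : 0 < x j := lt_of_le_of_ne (hbox j).1 (Ne.symm hj.1)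
          have hj1 : x j < 1 := lt_of_le_of_ne (hbox j).2 hj.2
          have hwj : w j ≠ 0 := hnz j hj0 hj1
          set M := |w k| + |w j| with hM
          have hMpos : 0 < M := by
            have h1 := abs_pos.2 hwk
            have h2 := abs_nonneg (w j)
            positivity
          set δ := min (min (x k) (1 - x k)) (min (x j) (1 - x j)) with hδ
          have hδpos : 0 < δ :=
            lt_min (lt_min hk0' (by linarith)) (lt_min hj0 (by linarith))
          refine not_extreme_dir hbox hx
            (fun i => if i = k then δ * w j / M else if i = j then -(δ * w k / M) else 0)
            ?_ ?_ ?_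
          · intro h
            have h2 : (if j = k then δ * w j / M else if j = j then -(δ * w k / M) else 0 : ℝ) = 0 :=
              congr_fun h j
            rw [if_neg hjk, if_pos rfl, neg_eq_zero, div_eq_zero_iff] at h2
            rcases h2 with h2 | h2
            · rcases mul_eq_zero.1 h2 with h2 | h2
              · exact absurd h2 (ne_of_gt hδpos)
              · exact hwk h2
            · exact absurd h2 (ne_of_gt hMpos)
          · intro i
            show |(if i = k then δ * w j / M else if i = j then -(δ * w k / M) else 0 : ℝ)| ≤ _
            by_cases h : i = k
            · rw [if_pos h, h]
              have hb : |δ * w j / M| ≤ δ := by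
                rw [abs_div, abs_mul, abs_of_pos hδpos, abs_of_pos hMpos, div_le_iff₀ hMpos]
                nlinarith [abs_nonneg (w k)]
              exact le_trans hb (min_le_left _ _)
            · by_cases h' : i = j
              · rw [if_neg h, if_pos h', h', abs_neg]
                have hb : |δ * w k / M| ≤ δ := by
                  rw [abs_div, abs_mul, abs_of_pos hδpos, abs_of_pos hMpos, div_le_iff₀ hMpos]
                  nlinarith [abs_nonneg (w j)]
                exact le_trans hb (min_le_right _ _)
              · rw [if_neg h, if_neg h', abs_zero]
                exact le_min (hbox i).1 (by linarith [(hbox i).2])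
          · have h3 : ∑ i, w i *
                (if i = k then δ * w j / M else if i = j then -(δ * w k / M) else 0) = 0 := by
              have hterm : ∀ i, w i *
                  (if i = k then δ * w j / M else if i = j then -(δ * w k / M) else 0)
                  = (if i = k then w k * (δ * w j / M) else 0)
                    + (if i = j then w j * (-(δ * w k / M)) else 0) := by
                intro i
                by_cases h : i = k
                · subst h; rw [if_pos rfl, if_pos rfl, if_neg hjk.symm]; ring
                · by_cases h' : i = j
                  · subst h'; rw [if_neg h, if_pos rfl, if_neg h, if_pos rfl]; ring
                  · rw [if_neg h, if_neg h', if_neg h, if_neg h']; ring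
              rw [Finset.sum_congr rfl fun i _ => hterm i, Finset.sum_add_distrib]
              rw [Finset.sum_ite_eq' Finset.univ k, Finset.sum_ite_eq' Finset.univ j]
              simp only [Finset.mem_univ, if_pos]
              field_simp
              ring
            rw [h3, heq]
            simp
        -- now build V₂ membership
        right
        set S := Finset.univ.filter (fun i => x i = 1) with hS
        have hkS : k ∉ S := by simp [hS, hk1]
        have hsplit : ∑ i, w i * x i = (∑ i ∈ S, w i) + w k * x k := by
          have h1 : ∀ i, w i * x i
              = w i * (if i ∈ S then (1:ℝ) else 0) + (if i = k then w k * x k else 0) := by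
            intro i
            by_cases h : i = k
            · subst h
              rw [if_neg hkS, if_pos rfl]; ring
            · rcases hone i h with h0 | h1
              · have : i ∉ S := by simp [hS, h0]
                rw [if_neg this, if_neg h, h0]; ring
              · have : i ∈ S := by simp [hS, h1]
                rw [if_pos this, if_neg h, h1]; ring
          rw [Finset.sum_congr rfl fun i _ => h1 i, Finset.sum_add_distrib, sum_indicator']
          rw [Finset.sum_ite_eq' Finset.univ k]
          simp
        have hSU : ∑ i ∈ S ∪ {k}, w i = (∑ i ∈ S, w i) + w k := by
          rw [Finset.sum_union (Finset.disjoint_singleton_right.2 hkS)]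
          simp
        have hxk : x k = (c - ∑ i ∈ S, w i) / w k := by
          rw [eq_div_iff hwk]
          rw [heq] at hsplit
          linarith
        refine ⟨S, k, hkS, ?_, ?_⟩
        · rcases lt_or_gt_of_ne hwk with hneg | hpos
          · right
            rw [heq] at hsplit
            refine ⟨by nlinarith, ?_⟩
            rw [hSU]; nlinarith
          · left
            rw [heq] at hsplit
            refine ⟨by nlinarith, ?_⟩
            rw [hSU]; nlinarith
        · rw [← hxk]
          funext i
          simp only [Pi.add_apply, Pi.smul_apply, smul_eq_mul, heS, Finset.mem_singleton]
          by_cases h : i = k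
          · subst h
            rw [if_neg hkS, if_pos rfl]
            ring
          · rw [if_neg h, mul_zero, add_zero]
            rcases hone i h with h0 | h1
            · have : i ∉ S := by simp [hS, h0]
              rw [if_neg this, h0]
            · have : i ∈ S := by simp [hS, h1]
              rw [if_pos this, h1]
  · -- backward
    rintro (⟨S, hSle, rfl⟩ | ⟨S, k, hkS, hcase, rfl⟩)
    · rw [mem_extremePoints]
      have hbox : ∀ i, 0 ≤ eS S i ∧ eS S i ≤ 1 := by
        intro i; rw [heS]; split <;> norm_num
      have hsum : ∑ i, w i * eS S i = ∑ i ∈ S, w i := by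
        simp only [heS]; exact sum_indicator' w S
      refine ⟨⟨hbox, by rw [hsum]; exact hSle⟩, ?_⟩
      rintro y ⟨hybox, -⟩ z ⟨hzbox, -⟩ hseg
      obtain ⟨a, b, ha, hb, hab, habxy⟩ := hseg
      have hcoord : ∀ i, y i = eS S i ∧ z i = eS S i := by
        intro i
        have h := congr_fun habxy i
        simp only [Pi.add_apply, Pi.smul_apply, smul_eq_mul] at h
        rw [heS]
        by_cases hi : i ∈ S
        · rw [heS, if_pos hi] at h
          rw [if_pos hi]
          exact combo_one' ha hb hab (hybox i).2 (hzbox i).2 h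
        · rw [heS, if_neg hi] at h
          rw [if_neg hi]
          exact combo_zero' ha hb (hybox i).1 (hzbox i).1 h
      exact ⟨funext fun i => (hcoord i).1, funext fun i => (hcoord i).2⟩
    · -- V₂ point
      set t := (c - ∑ i ∈ S, w i) / w k with ht
      have hSU : ∑ i ∈ S ∪ {k}, w i = (∑ i ∈ S, w i) + w k := by
        rw [Finset.sum_union (Finset.disjoint_singleton_right.2 hkS)]
        simp
      have hwk : w k ≠ 0 := by
        rcases hcase with ⟨h1, h2⟩ | ⟨h1, h2⟩ <;> rw [hSU] at h2 <;>
          intro h <;> rw [h] at h2 <;> simp at h2 <;> linarith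
      have htm : t * w k = c - ∑ i ∈ S, w i := div_mul_cancel₀ _ hwk
      have ht0 : 0 < t := by
        rcases hcase with ⟨h1, h2⟩ | ⟨h1, h2⟩ <;> rw [hSU] at h2 <;> nlinarith
      have ht1 : t < 1 := by
        rcases hcase with ⟨h1, h2⟩ | ⟨h1, h2⟩ <;> rw [hSU] at h2 <;> nlinarith
      have hxco : ∀ i, (eS S + t • eS {k}) i
          = if i = k then t else (if i ∈ S then (1:ℝ) else 0) := by
        intro i
        simp only [Pi.add_apply, Pi.smul_apply, smul_eq_mul, heS, Finset.mem_singleton]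
        by_cases h : i = k
        · subst h
          rw [if_neg hkS, if_pos rfl, if_pos rfl]; ring
        · rw [if_neg h, if_neg h, mul_zero, add_zero]
      have hbox : ∀ i, 0 ≤ (eS S + t • eS {k}) i ∧ (eS S + t • eS {k}) i ≤ 1 := by
        intro i
        rw [hxco]
        by_cases h : i = k
        · rw [if_pos h]; exact ⟨le_of_lt ht0, le_of_lt ht1⟩
        · rw [if_neg h]; split <;> norm_num
      have hxsum : ∑ i, w i * (eS S + t • eS {k}) i = c := by
        have h1 : ∀ i, w i * (eS S + t • eS {k}) i
            = w i * (if i ∈ S then (1:ℝ) else 0) + (if i = k then w k * t else 0) := by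
          intro i
          rw [hxco]
          by_cases h : i = k
          · subst h
            rw [if_pos rfl, if_pos rfl, if_neg hkS]; ring
          · rw [if_neg h, if_neg h]; ring
        rw [Finset.sum_congr rfl fun i _ => h1 i, Finset.sum_add_distrib, sum_indicator']
        rw [Finset.sum_ite_eq' Finset.univ k]
        simp only [Finset.mem_univ, if_pos]
        nlinarith [htm]
      rw [mem_extremePoints]
      refine ⟨⟨hbox, le_of_eq hxsum⟩, ?_⟩
      rintro y ⟨hybox, hyle⟩ z ⟨hzbox, hzle⟩ hseg
      obtain ⟨a, b, ha, hb, hab, habxy⟩ := hseg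
      have hcoord : ∀ i, i ≠ k → y i = (eS S + t • eS {k}) i ∧ z i = (eS S + t • eS {k}) i := by
        intro i hik
        have h := congr_fun habxy i
        simp only [Pi.add_apply, Pi.smul_apply, smul_eq_mul] at h
        have hik' : i ∉ ({k} : Finset (Fin n)) := by simpa using hik
        rw [heS S i, heS {k} i, if_neg hik', mul_zero, add_zero] at h
        rw [hxco i, if_neg hik]
        by_cases hi : i ∈ S
        · rw [if_pos hi] at h ⊢
          exact combo_one' ha hb hab (hybox i).2 (hzbox i).2 h
        · rw [if_neg hi] at h ⊢
          exact combo_zero' ha hb (hybox i).1 (hzbox i).1 h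
      -- sums of y and z are both = c
      have hlin : a * ∑ i, w i * y i + b * ∑ i, w i * z i = c := by
        rw [Finset.mul_sum, Finset.mul_sum, ← Finset.sum_add_distrib]
        have h2 : ∀ i, a * (w i * y i) + b * (w i * z i) = w i * (a • y + b • z) i := by
          intro i
          simp only [Pi.add_apply, Pi.smul_apply, smul_eq_mul]
          ring
        rw [Finset.sum_congr rfl fun i _ => h2 i, habxy, hxsum]
      have hyeq : ∑ i, w i * y i = c := by
        refine le_antisymm hyle (not_lt.1 fun hcon => ?_)
        have h1 : a * ∑ i, w i * y i < a * c := mul_lt_mul_of_pos_left hcon ha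
        have h2 : b * ∑ i, w i * z i ≤ b * c := mul_le_mul_of_nonneg_left hzle hb.le
        have h3 : a * c + b * c = c := by rw [← add_mul, hab, one_mul]
        linarith
      have hzeq : ∑ i, w i * z i = c := by
        refine le_antisymm hzle (not_lt.1 fun hcon => ?_)
        have h1 : b * ∑ i, w i * z i < b * c := mul_lt_mul_of_pos_left hcon hb
        have h2 : a * ∑ i, w i * y i ≤ a * c := mul_le_mul_of_nonneg_left hyle ha.le
        have h3 : a * c + b * c = c := by rw [← add_mul, hab, one_mul]
        linarith
      -- deduce y k = t, z k = t
      have key : ∀ u : Fin n → ℝ, (∀ i, i ≠ k → u i = (eS S + t • eS {k}) i) →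
          (∑ i, w i * u i = c) → u = (eS S + t • eS {k}) := by
        intro u hu husum
        have herase : ∑ i ∈ Finset.univ.erase k, w i * u i
            = ∑ i ∈ Finset.univ.erase k, w i * (eS S + t • eS {k}) i :=
          Finset.sum_congr rfl fun i hi => by
            rw [hu i (Finset.ne_of_mem_erase hi)]
        have hu' : w k * u k + ∑ i ∈ Finset.univ.erase k, w i * u i = ∑ i, w i * u i :=
          Finset.add_sum_erase _ (fun i => w i * u i) (Finset.mem_univ k)
        have hx' : w k * (eS S + t • eS {k}) k
            + ∑ i ∈ Finset.univ.erase k, w i * (eS S + t • eS {k}) i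
            = ∑ i, w i * (eS S + t • eS {k}) i :=
          Finset.add_sum_erase _ (fun i => w i * (eS S + t • eS {k}) i) (Finset.mem_univ k)
        have huk : u k = (eS S + t • eS {k}) k := by
          have h9 : w k * u k = w k * (eS S + t • eS {k}) k := by
            rw [herase, husum] at hu'
            rw [hxsum] at hx'
            linarith
          exact mul_left_cancel₀ hwk h9
        funext i
        by_cases h : i = k
        · subst h; exact huk
        · exact hu i h
      constructor
      · exact key y (fun i hi => (hcoord i hi).1) hyeq
      · exact key z (fun i hi => (hcoord i hi).2) hzeq
end

section
/- Let b_1,...,b_d be positive integers with ∑ b_i = 2β, and let w = (b_1,...,b_d,-β,β+1/2). Then there exists a chain of sets ∅ = S_0 ⊊ S_1 ⊊ ... ⊊ S_{d+1} = [d+1] with |S_j \ S_{j-1}| = 1 for all j, such that w·e_{S_j} ≤ β + 1/4 < w·e_{S_j ∪ {d+2}} for all j, if and only if the Partition instance b has a solution, i.e. there exists a subset T ⊆ [d] with ∑_{i∈T} b_i = β. -/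
private lemma prefix_sum_bounds (l : List ℚ) (h : ∀ x ∈ l, 0 ≤ x) (j : ℕ) :
    0 ≤ (l.take j).sum ∧ (l.take j).sum ≤ l.sum := by
  constructor
  · exact List.sum_nonneg (fun x hx => h x (List.mem_of_mem_take hx))
  · have h1 : l.sum = (l.take j).sum + (l.drop j).sum := by
      rw [← List.sum_append, List.take_append_drop]
    have h2 : 0 ≤ (l.drop j).sum :=
      List.sum_nonneg (fun x hx => h x (List.mem_of_mem_drop hx))
    linarith

/-- there is a saturated chain `∅ = S₀ ⊊ S₁ ⊊ ⋯ ⊊ S_{d+1} = [d+1]`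
with `w·e_{S_j} ≤ β+1/4 < w·e_{S_j ∪ {d+2}}` for all `j` if and only if the
Partition instance `b` has a solution. -/
theorem chain_iff_partition (d : ℕ) (b : Fin d → ℤ) (hb : ∀ i, 0 < b i)
    (β : ℤ) (hβ : ∑ i, b i = 2 * β)
    (w : Fin (d + 2) → ℚ)
    (hw : ∀ i : Fin (d + 2), w i =
      if h : (i : ℕ) < d then (b ⟨i, h⟩ : ℚ)
      else if (i : ℕ) = d then -(β : ℚ) else (β : ℚ) + 1/2) :
    (∃ S : ℕ → Finset (Fin (d + 2)),
      S 0 = ∅ ∧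
      S (d + 1) = Finset.univ.filter (fun i : Fin (d + 2) => (i : ℕ) < d + 1) ∧
      (∀ j < d + 1, S j ⊆ S (j + 1) ∧ (S (j + 1)).card = (S j).card + 1) ∧
      (∀ j ≤ d + 1, (∀ i ∈ S j, (i : ℕ) < d + 1) ∧
        ∑ i ∈ S j, w i ≤ (β : ℚ) + 1/4 ∧
        (β : ℚ) + 1/4 < ∑ i ∈ S j, w i + w ⟨d + 1, by omega⟩)) ↔
    (∃ T : Finset (Fin d), ∑ i ∈ T, b i = β) := by
  set ι : Fin d → Fin (d + 2) := fun i => ⟨i, by omega⟩ with hι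
  have hιinj : Function.Injective ι := by
    intro a b h
    simpa [hι, Fin.ext_iff] using h
  set dd : Fin (d + 2) := ⟨d, by omega⟩ with hdd
  have hwι : ∀ i : Fin d, w (ι i) = (b i : ℚ) := by
    intro i
    rw [hw]
    simp [hι, i.isLt]
  have hwdd : w dd = -(β : ℚ) := by
    rw [hw]; simp [hdd]
  have hwlast : w ⟨d + 1, by omega⟩ = (β : ℚ) + 1/2 := by
    rw [hw]; simp
  constructor
  · rintro ⟨S, hS0, hSend, hchain, hcond⟩
    have hddend : dd ∈ S (d + 1) := by
      rw [hSend]; simp [hdd]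
    have hex : ∃ j, dd ∈ S j := ⟨d + 1, hddend⟩
    have hjle : Nat.find hex ≤ d + 1 := Nat.find_le hddend
    have hjmem : dd ∈ S (Nat.find hex) := Nat.find_spec hex
    have hjpos : 0 < Nat.find hex := by
      rcases Nat.eq_zero_or_pos (Nat.find hex) with h | h
      · rw [h, hS0] at hjmem; simp at hjmem
      · exact h
    obtain ⟨k, hk⟩ : ∃ k, Nat.find hex = k + 1 := ⟨Nat.find hex - 1, by omega⟩
    rw [hk] at hjmem hjle
    have hknot : dd ∉ S k := Nat.find_min hex (by omega)
    obtain ⟨hsub, hcard⟩ := hchain k (by omega)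
    have hSk1 : S (k + 1) = insert dd (S k) := by
      refine (Finset.eq_of_subset_of_card_le ?_ ?_).symm
      · intro x hx
        rcases Finset.mem_insert.mp hx with h | h
        · rw [h]; exact hjmem
        · exact hsub h
      · rw [hcard, Finset.card_insert_of_notMem hknot]
    set T : Finset (Fin d) := Finset.univ.filter (fun i => ι i ∈ S k) with hT
    have hSkim : S k = T.image ι := by
      ext x
      simp only [Finset.mem_image, hT, Finset.mem_filter, Finset.mem_univ, true_and]
      constructor
      · intro hx
        have hx1 : (x : ℕ) < d + 1 := (hcond k (by omega)).1 x hx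
        have hx2 : (x : ℕ) ≠ d := by
          intro h
          exact hknot (by rwa [show dd = x by simp [hdd, Fin.ext_iff, h.symm]])
        refine ⟨⟨x, by omega⟩, ?_, ?_⟩
        · simpa [hι, Fin.ext_iff] using hx
        · simp [hι, Fin.ext_iff]
      · rintro ⟨i, hi, rfl⟩
        exact hi
    have hsumk : ∑ i ∈ S k, w i = ((∑ i ∈ T, b i : ℤ) : ℚ) := by
      rw [hSkim, Finset.sum_image (fun a _ c _ h => hιinj h)]
      push_cast
      exact Finset.sum_congr rfl (fun i _ => hwι i)
    have h1 : ∑ i ∈ S k, w i ≤ (β : ℚ) + 1/4 := (hcond k (by omega)).2.1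
    have h2 : (β : ℚ) + 1/4 < ∑ i ∈ S (k + 1), w i + w ⟨d + 1, by omega⟩ :=
      (hcond (k + 1) hjle).2.2
    have hsumk1 : ∑ i ∈ S (k + 1), w i = ∑ i ∈ S k, w i + w dd := by
      rw [hSk1, Finset.sum_insert hknot]; ring
    rw [hsumk1, hwdd, hwlast, hsumk] at h2
    rw [hsumk] at h1
    refine ⟨T, ?_⟩
    have hle : ∑ i ∈ T, b i ≤ β := by
      by_contra h
      push_neg at h
      have h' : ((β : ℚ)) + 1 ≤ ((∑ i ∈ T, b i : ℤ) : ℚ) := by exact_mod_cast h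
      linarith
    have hge : β ≤ ∑ i ∈ T, b i := by
      by_contra h
      push_neg at h
      have h' : ((∑ i ∈ T, b i : ℤ) : ℚ) ≤ ((β : ℚ)) - 1 := by
        exact_mod_cast Int.le_sub_one_of_lt h
      linarith
    omega
  · rintro ⟨T, hT⟩
    have hTc : ∑ i ∈ Tᶜ, b i = β := by
      have := Finset.sum_add_sum_compl T b
      omega
    set A : List ℚ := T.toList.map (fun i => (b i : ℚ)) with hA
    set B : List ℚ := Tᶜ.toList.map (fun i => (b i : ℚ)) with hB
    set L : List (Fin (d + 2)) := T.toList.map ι ++ dd :: Tᶜ.toList.map ι with hL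
    have hLnodup : L.Nodup := by
      rw [hL, List.nodup_append]
      refine ⟨(Finset.nodup_toList T).map hιinj, ?_, ?_⟩
      · refine List.Nodup.cons ?_ ((Finset.nodup_toList Tᶜ).map hιinj)
        intro h
        obtain ⟨i, _, hi⟩ := List.mem_map.mp h
        have : (i : ℕ) = d := by simpa [hι, hdd, Fin.ext_iff] using hi
        omega
      · intro x hx y hx' hxy
        subst hxy
        obtain ⟨i, hiT, rfl⟩ := List.mem_map.mp hx
        rcases List.mem_cons.mp hx' with h | h
        · have : (i : ℕ) = d := by simpa [hι, hdd, Fin.ext_iff] using h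
          omega
        · obtain ⟨i', hi'T, hi'⟩ := List.mem_map.mp h
          have : i' = i := hιinj hi'
          subst this
          rw [Finset.mem_toList] at hiT hi'T
          simp [hiT] at hi'T
    have hLlen : L.length = d + 1 := by
      rw [hL]
      simp only [List.length_append, List.length_map, List.length_cons,
        Finset.length_toList]
      have := Finset.card_add_card_compl T
      simp only [Fintype.card_fin] at this
      omega
    have hLmem : ∀ x ∈ L, (x : ℕ) < d + 1 := by
      intro x hx
      rw [hL] at hx
      rcases List.mem_append.mp hx with h | h
      · obtain ⟨i, _, rfl⟩ := List.mem_map.mp h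
        have := i.isLt; simp [hι]
      · rcases List.mem_cons.mp h with h | h
        · rw [h, hdd]; simp
        · obtain ⟨i, _, rfl⟩ := List.mem_map.mp h
          have := i.isLt; simp [hι]
    have hmap : ∀ s : Finset (Fin d),
        (s.toList.map ι).map w = s.toList.map (fun i => (b i : ℚ)) := by
      intro s
      rw [List.map_map]
      exact List.map_congr_left (fun i _ => hwι i)
    have hLw : L.map w = A ++ (-(β : ℚ)) :: B := by
      rw [hL, hA, hB]
      simp only [List.map_append, List.map_cons]
      rw [hmap, hmap, hwdd]
    -- sums over prefixes
    have hApos : ∀ x ∈ A, 0 ≤ x := by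
      rintro x hx
      obtain ⟨i, _, rfl⟩ := List.mem_map.mp hx
      exact_mod_cast (hb i).le
    have hBpos : ∀ x ∈ B, 0 ≤ x := by
      rintro x hx
      obtain ⟨i, _, rfl⟩ := List.mem_map.mp hx
      exact_mod_cast (hb i).le
    have hAsum : A.sum = (β : ℚ) := by
      rw [hA, Finset.sum_map_toList, ← hT]; push_cast; ring
    have hBsum : B.sum = (β : ℚ) := by
      rw [hB, Finset.sum_map_toList, ← hTc]; push_cast; ring
    have hprefix : ∀ j : ℕ, 0 ≤ ((L.map w).take j).sum ∧ ((L.map w).take j).sum ≤ (β : ℚ) := by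
      intro j
      rw [hLw, List.take_append, List.sum_append]
      rcases le_or_gt j A.length with h | h
      · have : j - A.length = 0 := by omega
        rw [this]
        simp only [List.take_zero, List.sum_nil, add_zero]
        have := prefix_sum_bounds A hApos j
        rw [hAsum] at this
        exact this
      · rw [List.take_of_length_le (by omega)]
        obtain ⟨m, hm⟩ : ∃ m, j - A.length = m + 1 := ⟨j - A.length - 1, by omega⟩
        rw [hm]
        simp only [List.take_succ_cons, List.sum_cons]
        have := prefix_sum_bounds B hBpos m
        rw [hBsum] at this
        constructor <;> [linarith [this.1]; linarith [this.2]]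
    refine ⟨fun j => (L.take j).toFinset, by simp, ?_, ?_, ?_⟩
    · show (L.take (d + 1)).toFinset = _
      apply Finset.eq_of_subset_of_card_le
      · intro x hx
        simp only [Finset.mem_filter, Finset.mem_univ, true_and]
        exact hLmem x (List.mem_of_mem_take (List.mem_toFinset.mp hx))
      · have h1 : (Finset.univ.filter (fun i : Fin (d + 2) => (i : ℕ) < d + 1)).card ≤ d + 1 := by
          have hsub : Finset.univ.filter (fun i : Fin (d + 2) => (i : ℕ) < d + 1) ⊆
              Finset.univ.erase ⟨d + 1, by omega⟩ := by
            intro x hx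
            simp only [Finset.mem_filter, Finset.mem_univ, true_and] at hx
            simp only [Finset.mem_erase, Finset.mem_univ, and_true]
            simp [Fin.ext_iff]; omega
          calc _ ≤ (Finset.univ.erase (⟨d + 1, by omega⟩ : Fin (d + 2))).card :=
                Finset.card_le_card hsub
            _ = d + 1 := by rw [Finset.card_erase_of_mem (Finset.mem_univ _)]; simp
        have h2 : (L.take (d + 1)).toFinset.card = d + 1 := by
          rw [List.toFinset_card_of_nodup (hLnodup.sublist (List.take_sublist _ _))]
          rw [List.length_take, hLlen, min_self]
        omega
    · intro j hj
      have hjlt : j < L.length := by omega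
      have htake : L.take (j + 1) = L.take j ++ [L.get ⟨j, hjlt⟩] := by
        rw [List.take_succ]
        congr 1
        rw [List.getElem?_eq_getElem hjlt]
        rfl
      have hnotmem : L.get ⟨j, hjlt⟩ ∉ L.take j := by
        have hnd : (L.take (j + 1)).Nodup := hLnodup.sublist (List.take_sublist _ _)
        rw [htake, List.nodup_append] at hnd
        intro h
        exact hnd.2.2 _ h _ (List.mem_singleton_self _) rfl
      constructor
      · show (L.take j).toFinset ⊆ (L.take (j + 1)).toFinset
        intro x hx
        rw [List.mem_toFinset] at hx ⊢
        rw [htake]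
        exact List.mem_append_left _ hx
      · show (L.take (j + 1)).toFinset.card = (L.take j).toFinset.card + 1
        have heq : (L.take (j + 1)).toFinset = insert (L.get ⟨j, hjlt⟩) (L.take j).toFinset := by
          rw [htake, List.toFinset_append]
          simp only [List.toFinset_cons, List.toFinset_nil, LawfulSingleton.insert_empty_eq]
          rw [Finset.insert_eq, Finset.union_comm]
        rw [heq, Finset.card_insert_of_notMem (by rwa [List.mem_toFinset])]
    · intro j hj
      show (∀ i ∈ (L.take j).toFinset, (i : ℕ) < d + 1) ∧
        ∑ i ∈ (L.take j).toFinset, w i ≤ (β : ℚ) + 1/4 ∧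
        (β : ℚ) + 1/4 < ∑ i ∈ (L.take j).toFinset, w i + w ⟨d + 1, by omega⟩
      have hnd : (L.take j).Nodup := hLnodup.sublist (List.take_sublist _ _)
      have hsum : ∑ i ∈ (L.take j).toFinset, w i = ((L.map w).take j).sum := by
        rw [List.sum_toFinset w hnd, ← List.map_take]
      obtain ⟨h0, h1⟩ := hprefix j
      refine ⟨?_, ?_, ?_⟩
      · intro i hi
        exact hLmem i (List.mem_of_mem_take (List.mem_toFinset.mp hi))
      · rw [hsum]; linarith
      · rw [hsum, hwlast]; linarith
end

section
/- In the silo graph G_d (d ≥ 3), there is a path of length d-2 from (1,2) to (i,d) for each i ∈ [d-1] \ {2}, and there is a path of length d-2 from (1,2) to (d,d-1). -/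
/-- A valid vertex of the `d`-th silo graph: a pair of distinct elements of `{1,…,d}`. -/
def siloValid (d : ℕ) (p : ℕ × ℕ) : Prop :=
  1 ≤ p.1 ∧ p.1 ≤ d ∧ 1 ≤ p.2 ∧ p.2 ≤ d ∧ p.1 ≠ p.2

/-- One direction of the silo graph adjacency (from the lower second coordinate up). -/
def siloStep (p q : ℕ × ℕ) : Prop :=
  (p.1 ≠ q.1 ∧ p.2 = q.2) ∨
  (q.2 = p.2 + 1 ∧ q.1 = p.1 ∧ p.2 ≠ p.1 - 1) ∨
  (q.2 = p.2 + 2 ∧ q.1 = p.1 ∧ p.2 = p.1 - 1)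

/-- The `d`-th silo graph `G_d`. -/
def siloGraph (d : ℕ) : SimpleGraph (ℕ × ℕ) where
  Adj p q := siloValid d p ∧ siloValid d q ∧ (siloStep p q ∨ siloStep q p)
  symm := ⟨fun p q h => ⟨h.2.1, h.1, h.2.2.symm⟩⟩
  loopless := ⟨by
    rintro p ⟨_, _, h | h⟩ <;>
      rcases h with ⟨h1, h2⟩ | ⟨h1, _, _⟩ | ⟨h1, _, _⟩ <;> omega⟩

/-!
All the paths climb: after one horizontal step in row `2` (if needed) they go straight up
column `i`, jumping from `(i, i-1)` to `(i, i+1)` over the missing vertex `(i, i)`.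
Since the second coordinate strictly increases after the first step, no vertex repeats.
-/

open SimpleGraph Walk

theorem SimpleGraph.Walk.IsPath.concat_of_forall_le {V α : Type*} [Preorder α]
    {G : SimpleGraph V} (f : V → α) {u v w : V} {p : G.Walk u v} (hp : p.IsPath)
    (hpf : ∀ x ∈ p.support, f x ≤ f v) (h : G.Adj v w) (hvw : f v < f w) :
    (p.concat h).IsPath ∧ ∀ x ∈ (p.concat h).support, f x ≤ f w := by
  refine ⟨hp.concat (fun hw => (hvw.trans_le (hpf w hw)).false) h, fun x hx => ?_⟩
  rw [support_concat, List.mem_append, List.mem_singleton] at hx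
  rcases hx with hx | rfl
  exacts [(hpf x hx).trans hvw.le, le_rfl]

namespace siloGraph

variable {d : ℕ}

theorem adj_of_snd_eq {a a' b : ℕ} (hp : siloValid d (a, b)) (hq : siloValid d (a', b))
    (h : a ≠ a') : (siloGraph d).Adj (a, b) (a', b) :=
  ⟨hp, hq, .inl (.inl ⟨h, rfl⟩)⟩

theorem adj_succ_snd {a b : ℕ} (hp : siloValid d (a, b)) (hq : siloValid d (a, b + 1)) :
    (siloGraph d).Adj (a, b) (a, b + 1) :=
  ⟨hp, hq, .inl (.inr (.inl ⟨rfl, rfl, by simp only [siloValid] at hq; omega⟩))⟩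

theorem adj_diag_skip {a : ℕ} (ha : 2 ≤ a) (had : a + 1 ≤ d) :
    (siloGraph d).Adj (a, a - 1) (a, a + 1) :=
  ⟨by simp only [siloValid]; omega, by simp only [siloValid]; omega,
    .inl (.inr (.inr ⟨by omega, rfl, rfl⟩))⟩

theorem exists_isPath_extend_up {x : ℕ × ℕ} {a b c : ℕ} (w : (siloGraph d).Walk x (a, b))
    (hw : w.IsPath) (hrow : ∀ v ∈ w.support, v.2 ≤ b) (ha : 1 ≤ a) (had : a ≤ d) (hb : 1 ≤ b)
    (hbc : b ≤ c) (hcd : c ≤ d) (hab : a < b ∨ c < a) :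
    ∃ w' : (siloGraph d).Walk x (a, c),
      w'.IsPath ∧ w'.length = w.length + (c - b) ∧ ∀ v ∈ w'.support, v.2 ≤ c := by
  induction c, hbc using Nat.le_induction with
  | base => exact ⟨w, hw, by simp, hrow⟩
  | succ c hbc ih =>
    obtain ⟨w', hw', hlen, hrow'⟩ := ih (by omega) (by omega)
    have hadj := adj_succ_snd (d := d) (a := a) (b := c)
      (by simp only [siloValid]; omega) (by simp only [siloValid]; omega)
    obtain ⟨hpath, hrow''⟩ := hw'.concat_of_forall_le Prod.snd hrow' hadj (by simp)
    exact ⟨w'.concat hadj, hpath, by simp [hlen]; omega, hrow''⟩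

theorem exists_isPath_from_one_two {a c : ℕ} (h3a : 3 ≤ a) (had : a ≤ d)
    (h2c : 2 ≤ c) (hcd : c ≤ d) (hca : c < a) :
    ∃ w : (siloGraph d).Walk (1, 2) (a, c),
      w.IsPath ∧ w.length = c - 1 ∧ ∀ v ∈ w.support, v.2 ≤ c := by
  have hadj := adj_of_snd_eq (d := d) (a := 1) (a' := a) (b := 2)
    (by simp only [siloValid]; omega) (by simp only [siloValid]; omega) (by omega)
  obtain ⟨w, hw, hlen, hrow⟩ := exists_isPath_extend_up hadj.toWalk hadj.isPath_toWalk
    (by simp) (by omega) had one_le_two h2c hcd (.inr hca)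
  exact ⟨w, hw, by simp [hlen]; omega, hrow⟩

end siloGraph

open siloGraph in
/-- in `G_d`, there is a path of length `d-2` from `(1,2)` to
`(i,d)` for every `i ∈ [d-1] \ {2}`, and a path of length `d-2` from `(1,2)`
to `(d,d-1)`. -/
theorem silo_paths_from_12 (d : ℕ) (hd : 3 ≤ d) :
    (∀ i : ℕ, 1 ≤ i → i ≤ d - 1 → i ≠ 2 →
      ∃ p : (siloGraph d).Walk (1, 2) (i, d), p.IsPath ∧ p.length = d - 2) ∧
    (∃ p : (siloGraph d).Walk (1, 2) (d, d - 1), p.IsPath ∧ p.length = d - 2) := by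
  refine ⟨fun i hi1 hid hi2 => ?_, ?_⟩
  · obtain rfl | hi3 : i = 1 ∨ 3 ≤ i := by omega
    · obtain ⟨w, hw, hlen, -⟩ := exists_isPath_extend_up (nil : (siloGraph d).Walk (1, 2) _)
        IsPath.nil (by simp) le_rfl (by omega) (by omega) (by omega) le_rfl (.inl one_lt_two)
      exact ⟨w, hw, by simpa using hlen⟩
    · obtain ⟨w, hw, hlen, hrow⟩ :=
        exists_isPath_from_one_two (d := d) (c := i - 1) hi3 (by omega) (by omega) (by omega)
          (by omega)
      have hskip := adj_diag_skip (d := d) (by omega : 2 ≤ i) (by omega)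
      obtain ⟨hw', hrow'⟩ := hw.concat_of_forall_le Prod.snd hrow hskip (by simp)
      obtain ⟨w'', hw'', hlen'', -⟩ := exists_isPath_extend_up (w.concat hskip) hw' hrow'
        (by omega) (by omega) (by omega) (by omega) le_rfl (.inl (by omega))
      exact ⟨w'', hw'', by simp [hlen'', hlen]; omega⟩
  · obtain ⟨w, hw, hlen, -⟩ :=
      exists_isPath_from_one_two (d := d) (a := d) (c := d - 1) hd le_rfl
        (by omega) (by omega) (by omega)
    exact ⟨w, hw, by omega⟩
end

section
/- In the silo graph G_d (d ≥ 3), every vertex (a,b) has distance at most d-2 to some vertex in the set {(1,2)} ∪ {(i,1) : 2 ≤ i ≤ d}. -/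
/-!
Walk straight down the column of `(a, b)`. Each step lowers the second coordinate by one,
except that the missing vertex `(a, a)` is jumped over by the edge `(a, a + 1) — (a, a - 1)`.
Column `a ≥ 2` is thus descended to `(a, 1)` in `b - 1` steps from below the diagonal and in
`b - 2` steps from above it, and column `1` to `(1, 2)` in `b - 2` steps; as `b ≤ d`, and
`b < a ≤ d` in the first case, each is at most `d - 2`.
-/

variable {d a : ℕ}

lemma siloGraph_adj_column_pred {b : ℕ} (ha : 1 ≤ a) (had : a ≤ d) (hb : 1 ≤ b)
    (hbd : b + 1 ≤ d) (hab : a ≠ b) (hab' : a ≠ b + 1) :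
    (siloGraph d).Adj (a, b + 1) (a, b) := by
  simp only [siloGraph, siloValid, siloStep, true_and]
  omega

lemma siloGraph_adj_column_skip (ha : 2 ≤ a) (had : a + 1 ≤ d) :
    (siloGraph d).Adj (a, a + 1) (a, a - 1) := by
  simp only [siloGraph, siloValid, siloStep, true_and, and_true]
  omega

lemma exists_walk_column_down {c : ℕ} (ha : 1 ≤ a) (had : a ≤ d) (hc : 1 ≤ c) :
    ∀ b, c ≤ b → b ≤ d → b < a ∨ a < c →
      ∃ p : (siloGraph d).Walk (a, b) (a, c), p.length = b - c := by
  intro b hcb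
  induction b, hcb using Nat.le_induction with
  | base => exact fun _ _ => ⟨.nil, by simp⟩
  | succ b hcb ih =>
    intro hbd hseg
    obtain ⟨p, hp⟩ := ih (by omega) (by omega)
    refine ⟨.cons (siloGraph_adj_column_pred ha had (by omega) hbd (by omega) (by omega)) p, ?_⟩
    rw [SimpleGraph.Walk.length_cons]
    omega

lemma exists_walk_column_to_one_length_le (ha : 2 ≤ a) (had : a ≤ d) {b : ℕ} (hb : 1 ≤ b)
    (hbd : b ≤ d) (hab : a ≠ b) : ∃ p : (siloGraph d).Walk (a, b) (a, 1), p.length ≤ d - 2 := by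
  obtain hba | hab := lt_or_gt_of_ne hab.symm
  · obtain ⟨p, hp⟩ := exists_walk_column_down (by omega) had le_rfl b hb hbd (.inl hba)
    exact ⟨p, by omega⟩
  · obtain ⟨p, hp⟩ := exists_walk_column_down (c := a + 1) (by omega) had (by omega) b hab hbd
      (.inr (by omega))
    obtain ⟨q, hq⟩ := exists_walk_column_down (by omega) had le_rfl (a - 1) (by omega) (by omega)
      (.inl (by omega))
    refine ⟨p.append (.cons (siloGraph_adj_column_skip ha (by omega)) q), ?_⟩
    rw [SimpleGraph.Walk.length_append, SimpleGraph.Walk.length_cons]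
    omega

theorem silo_reach_ground_general (d : ℕ) (a b : ℕ)
    (h : siloValid d (a, b)) :
    ∃ t : ℕ × ℕ, (t = (1, 2) ∨ (2 ≤ t.1 ∧ t.1 ≤ d ∧ t.2 = 1)) ∧
      ∃ p : (siloGraph d).Walk (a, b) t, p.length ≤ d - 2 := by
  obtain ⟨ha, had, hb, hbd, hab⟩ := h
  dsimp only at ha had hb hbd hab
  obtain rfl | ha := eq_or_lt_of_le ha
  · obtain ⟨p, hp⟩ := exists_walk_column_down (c := 2) le_rfl (by omega) one_le_two b
      (by omega) hbd (.inr one_lt_two)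
    exact ⟨(1, 2), .inl rfl, p, by omega⟩
  · obtain ⟨p, hp⟩ := exists_walk_column_to_one_length_le ha had hb hbd hab
    exact ⟨(a, 1), .inr ⟨ha, had, rfl⟩, p, hp⟩

/-- every vertex of `G_d` can reach some vertex of
`{(1,2)} ∪ {(i,1) : 2 ≤ i ≤ d}` in at most `d-2` steps. -/
theorem silo_reach_ground (d : ℕ) (hd : 3 ≤ d) (a b : ℕ)
    (h : siloValid d (a, b)) :
    ∃ t : ℕ × ℕ, (t = (1, 2) ∨ (2 ≤ t.1 ∧ t.1 ≤ d ∧ t.2 = 1)) ∧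
      ∃ p : (siloGraph d).Walk (a, b) t, p.length ≤ d - 2 :=
  silo_reach_ground_general d a b h
end

section
/- Let d ≥ 3 and consider the silo graph G_d. Let M = {y_1,...,y_b, x_b,...,x_d} \ {s} and M' = {y_1,...,y_{b'}, x_{b'},...,x_d} \ {s'} be the variable sets associated with vertices (a,b) and (a',b') of G_d (where s ∈ {x_a, y_a} ∩ {y_1,...,y_b,x_b,...,x_d} and s' ∈ {x_{a'}, y_{a'}} ∩ {y_1,...,y_{b'},x_{b'},...,x_d}, and b ≤ b', (a,b) ≠ (a',b')). Then |M Δ M'| = 2 if and only if (a,b) and (a',b') are adjacent in G_d (i.e., b=b', or b'=b+1 ∧ a=a' ∧ b≠a-1, or b'=b+2 ∧ a=a' ∧ b=a-1). -/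
/-- The variable set associated with a vertex `(a,b)` of the silo graph:
`{y_1,…,y_b, x_b,…,x_d}` minus the element of `{x_a, y_a}` lying in it
(namely `y_a` if `a < b` and `x_a` if `a > b`). Here `x_i = Sum.inl i` and
`y_i = Sum.inr i`. -/
def Mset (d a b : ℕ) : Finset (ℕ ⊕ ℕ) :=
  (((Finset.Icc 1 b).image Sum.inr ∪ (Finset.Icc b d).image Sum.inl).erase
    (if a < b then Sum.inr a else Sum.inl a))


open Finset

def Yset (d b b' : ℕ) : Finset (ℕ ⊕ ℕ) :=
  (Finset.Icc 1 b).image Sum.inr ∪ (Finset.Icc b' d).image Sum.inl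

def sel (a b : ℕ) : ℕ ⊕ ℕ := if a < b then Sum.inr a else Sum.inl a

lemma mem_Yset_inr {d b b' i : ℕ} : Sum.inr i ∈ Yset d b b' ↔ 1 ≤ i ∧ i ≤ b := by
  simp [Yset]

lemma mem_Yset_inl {d b b' i : ℕ} : Sum.inl i ∈ Yset d b b' ↔ b' ≤ i ∧ i ≤ d := by
  simp [Yset]

lemma card_Yset {d b b' : ℕ} (h1 : 1 ≤ b) (h2 : b' ≤ d) :
    (Yset d b b').card = b + (d + 1 - b') := by
  rw [Yset, card_union_of_disjoint, card_image_of_injective _ Sum.inr_injective,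
    card_image_of_injective _ Sum.inl_injective, Nat.card_Icc, Nat.card_Icc]
  · omega
  · simp [Finset.disjoint_left]

lemma Yset_inter {d b b' : ℕ} (h : b ≤ b') :
    Yset d b b ∩ Yset d b' b' = Yset d b b' := by
  ext z
  cases z <;> simp [Yset] <;> omega

lemma Mset_eq (d a b : ℕ) : Mset d a b = (Yset d b b).erase (sel a b) := rfl

lemma sel_mem {d a b c b' : ℕ} (h : if a < b then 1 ≤ a ∧ a ≤ c else b' ≤ a ∧ a ≤ d) :
    sel a b ∈ Yset d c b' := by
  unfold sel
  split <;> rename_i hab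
  · rw [if_pos hab] at h; exact mem_Yset_inr.2 h
  · rw [if_neg hab] at h; exact mem_Yset_inl.2 h

lemma sel_notMem {d a b c b' : ℕ} (h : if a < b then ¬(1 ≤ a ∧ a ≤ c) else ¬(b' ≤ a ∧ a ≤ d)) :
    sel a b ∉ Yset d c b' := by
  unfold sel
  split <;> rename_i hab
  · rw [if_pos hab] at h; simpa [mem_Yset_inr] using h
  · rw [if_neg hab] at h; simpa [mem_Yset_inl] using h

lemma sel_inj {a b a' b' : ℕ} (h : sel a b = sel a' b') : a = a' := by
  unfold sel at h
  split at h <;> split at h <;> simp_all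

lemma sel_congr {a b b' : ℕ} (h : a < b ↔ a < b') : sel a b = sel a b' := by
  unfold sel; rw [if_congr h rfl rfl]

lemma card_symmDiff_aux {α : Type*} [DecidableEq α] (s t : Finset α) :
    (symmDiff s t).card + 2 * (s ∩ t).card = s.card + t.card := by
  have h1 := card_sdiff_add_card_inter s t
  have h2 := card_sdiff_add_card_inter t s
  have hd : Disjoint (s \ t) (t \ s) := disjoint_sdiff_sdiff
  have : (symmDiff s t).card = (s \ t).card + (t \ s).card := by
    rw [symmDiff_def, Finset.sup_eq_union, card_union_of_disjoint hd]
  rw [this, inter_comm t s] at *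
  omega

lemma erase_inter_erase {α : Type*} [DecidableEq α] (X Y : Finset α) (u v : α) :
    X.erase u ∩ Y.erase v = ((X ∩ Y).erase u).erase v := by
  ext z; simp only [mem_inter, mem_erase]; tauto

/-- the symmetric difference of the variable sets of two distinct
vertices `(a,b)`, `(a',b')` (with `b ≤ b'`) has size `2` exactly when the two
vertices are adjacent in the silo graph `G_d`. -/
theorem symmDiff_two_iff_adj (d : ℕ) (hd : 3 ≤ d) (a b a' b' : ℕ)
    (ha : 1 ≤ a ∧ a ≤ d) (hb : 1 ≤ b ∧ b ≤ d) (hab : a ≠ b)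
    (ha' : 1 ≤ a' ∧ a' ≤ d) (hb' : 1 ≤ b' ∧ b' ≤ d) (hab' : a' ≠ b')
    (hne : (a, b) ≠ (a', b')) (hle : b ≤ b') :
    (symmDiff (Mset d a b) (Mset d a' b')).card = 2 ↔
      (b = b' ∨ (b' = b + 1 ∧ a = a' ∧ b ≠ a - 1) ∨
        (b' = b + 2 ∧ a = a' ∧ b = a - 1)) := by
  obtain ⟨ha1, ha2⟩ := ha
  obtain ⟨hb1, hb2⟩ := hb
  obtain ⟨ha1', ha2'⟩ := ha'
  obtain ⟨hb1', hb2'⟩ := hb'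
  have hMcard : (Mset d a b).card = d := by
    rw [Mset_eq, card_erase_of_mem (sel_mem (by split <;> omega)), card_Yset hb1 hb2]
    omega
  have hMcard' : (Mset d a' b').card = d := by
    rw [Mset_eq, card_erase_of_mem (sel_mem (by split <;> omega)), card_Yset hb1' hb2']
    omega
  have hinter : Mset d a b ∩ Mset d a' b' =
      ((Yset d b b').erase (sel a b)).erase (sel a' b') := by
    rw [Mset_eq, Mset_eq, erase_inter_erase, Yset_inter hle]
  have hkey := card_symmDiff_aux (Mset d a b) (Mset d a' b')
  rw [hMcard, hMcard', hinter] at hkey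
  have hYcard : (Yset d b b').card = b + (d + 1 - b') := card_Yset hb1 hb2'
  obtain h0 | h1 | h2 | h3 : b' = b ∨ b' = b + 1 ∨ b' = b + 2 ∨ b + 3 ≤ b' := by omega
  · -- b' = b
    have haa : a ≠ a' := by rintro rfl; exact hne (by rw [h0])
    have hu : sel a b ∈ Yset d b b' := sel_mem (by split <;> omega)
    have hv : sel a' b' ∈ Yset d b b' := sel_mem (by split <;> omega)
    have huv : sel a b ≠ sel a' b' := fun h => haa (sel_inj h)
    have hc : (((Yset d b b').erase (sel a b)).erase (sel a' b')).card
        = b + (d + 1 - b') - 2 := by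
      rw [Finset.card_erase_of_mem (Finset.mem_erase.2 ⟨Ne.symm huv, hv⟩),
        Finset.card_erase_of_mem hu, hYcard]
      omega
    rw [hc] at hkey
    omega
  · -- b' = b + 1
    have hu : sel a b ∈ Yset d b b' := sel_mem (by split <;> omega)
    have hv : sel a' b' ∈ Yset d b b' := sel_mem (by split <;> omega)
    by_cases haa : a = a'
    · have huv : sel a b = sel a' b' := by
        rw [← haa]; exact sel_congr (by omega)
      have hc : (((Yset d b b').erase (sel a b)).erase (sel a' b')).card
          = b + (d + 1 - b') - 1 := by
        rw [← huv, Finset.erase_idem, Finset.card_erase_of_mem hu, hYcard]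
      rw [hc] at hkey
      omega
    · have huv : sel a b ≠ sel a' b' := fun h => haa (sel_inj h)
      have hc : (((Yset d b b').erase (sel a b)).erase (sel a' b')).card
          = b + (d + 1 - b') - 2 := by
        rw [Finset.card_erase_of_mem (Finset.mem_erase.2 ⟨Ne.symm huv, hv⟩),
          Finset.card_erase_of_mem hu, hYcard]
        omega
      rw [hc] at hkey
      omega
  · -- b' = b + 2
    by_cases hA : a = b + 1 <;> by_cases hA' : a' = b + 1
    · have hu : sel a b ∉ Yset d b b' := sel_notMem (by split <;> omega)
      have hv : sel a' b' ∉ Yset d b b' := sel_notMem (by split <;> omega)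
      have hc : (((Yset d b b').erase (sel a b)).erase (sel a' b')).card
          = b + (d + 1 - b') := by
        rw [Finset.erase_eq_of_notMem hu, Finset.erase_eq_of_notMem hv, hYcard]
      rw [hc] at hkey
      omega
    · have hu : sel a b ∉ Yset d b b' := sel_notMem (by split <;> omega)
      have hv : sel a' b' ∈ Yset d b b' := sel_mem (by split <;> omega)
      have hc : (((Yset d b b').erase (sel a b)).erase (sel a' b')).card
          = b + (d + 1 - b') - 1 := by
        rw [Finset.erase_eq_of_notMem hu, Finset.card_erase_of_mem hv, hYcard]
      rw [hc] at hkey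
      omega
    · have hu : sel a b ∈ Yset d b b' := sel_mem (by split <;> omega)
      have hv : sel a' b' ∉ Yset d b b' := sel_notMem (by split <;> omega)
      have hc : (((Yset d b b').erase (sel a b)).erase (sel a' b')).card
          = b + (d + 1 - b') - 1 := by
        rw [Finset.erase_eq_of_notMem
          (fun h => hv (Finset.mem_of_mem_erase h)),
          Finset.card_erase_of_mem hu, hYcard]
      rw [hc] at hkey
      omega
    · have hu : sel a b ∈ Yset d b b' := sel_mem (by split <;> omega)
      have hv : sel a' b' ∈ Yset d b b' := sel_mem (by split <;> omega)
      by_cases huv : sel a b = sel a' b'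
      · have hc : (((Yset d b b').erase (sel a b)).erase (sel a' b')).card
            = b + (d + 1 - b') - 1 := by
          rw [← huv, Finset.erase_idem, Finset.card_erase_of_mem hu, hYcard]
        rw [hc] at hkey
        omega
      · have hc : (((Yset d b b').erase (sel a b)).erase (sel a' b')).card
            = b + (d + 1 - b') - 2 := by
          rw [Finset.card_erase_of_mem (Finset.mem_erase.2 ⟨Ne.symm huv, hv⟩),
            Finset.card_erase_of_mem hu, hYcard]
          omega
        rw [hc] at hkey
        omega
  · -- b + 3 ≤ b'
    have hc : (((Yset d b b').erase (sel a b)).erase (sel a' b')).card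
        ≤ b + (d + 1 - b') := by
      calc (((Yset d b b').erase (sel a b)).erase (sel a' b')).card
          ≤ ((Yset d b b').erase (sel a b)).card := Finset.card_erase_le
        _ ≤ (Yset d b b').card := Finset.card_erase_le
        _ = _ := hYcard
    omega
end

section
/- Fix d ≥ 1 and starting basis [d] with variables x_1,...,x_d and new variables y_1,...,y_d. Define the sequence of formal sums: starting from the single monomial x^{[d]}, for k = 0,1,...,d-1 apply the operation that removes the monomial x^{[d]\[k]} y^{[k]} and adds the monomials ∑_{t∈[k]} x^{[d]\[k]} y^{([k]\{t})∪{k+1}} + ∑_{s ∈ [d]\[k]} x^{([d]\[k])\{s}} y^{[k]∪{k+1}}. Then the final formal sum equals y^{[d]} + ∑_{k=0}^{d-1} ( ∑_{i=1}^{k} x^{[d]\[k]} y^{[k+1]\{i}} + ∑_{j=k+2}^{d} x^{[d]\([k]∪{j})} y^{[k+1]} ). -/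
open MvPolynomial in
/-- the generating-function identity for the silo construction:
starting from `x^{[d]}` and applying the cut operation at steps `k = 0,…,d-1`,
the final formal sum equals
`y^{[d]} + ∑_{k=0}^{d-1} (∑_{i=1}^{k} x^{[d]\[k]} y^{[k+1]\{i}}
  + ∑_{j=k+2}^{d} x^{[d]\([k]∪{j})} y^{[k+1]})`. -/
theorem silo_generating_function (d : ℕ) (hd : 1 ≤ d)
    (xs ys : Finset ℕ → MvPolynomial (ℕ ⊕ ℕ) ℤ)
    (hxs : ∀ S, xs S = ∏ i ∈ S, X (Sum.inl i))
    (hys : ∀ S, ys S = ∏ i ∈ S, X (Sum.inr i))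
    (g : ℕ → MvPolynomial (ℕ ⊕ ℕ) ℤ)
    (hg0 : g 0 = xs (Finset.Icc 1 d))
    (hgs : ∀ k < d, g (k + 1) =
      g k - xs (Finset.Icc (k + 1) d) * ys (Finset.Icc 1 k)
      + ((∑ t ∈ Finset.Icc 1 k,
            xs (Finset.Icc (k + 1) d) * ys (((Finset.Icc 1 k).erase t) ∪ {k + 1}))
        + ∑ s ∈ Finset.Icc (k + 1) d,
            xs ((Finset.Icc (k + 1) d).erase s) * ys ((Finset.Icc 1 k) ∪ {k + 1}))) :
    g d = ys (Finset.Icc 1 d)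
      + ∑ k ∈ Finset.range d,
        ((∑ i ∈ Finset.Icc 1 k,
            xs (Finset.Icc (k + 1) d) * ys ((Finset.Icc 1 (k + 1)).erase i))
          + ∑ j ∈ Finset.Icc (k + 2) d,
            xs ((Finset.Icc (k + 1) d).erase j) * ys (Finset.Icc 1 (k + 1))) := by
  have key : ∀ k ≤ d, g k = xs (Finset.Icc (k + 1) d) * ys (Finset.Icc 1 k)
      + ∑ m ∈ Finset.range k,
        ((∑ i ∈ Finset.Icc 1 m,
            xs (Finset.Icc (m + 1) d) * ys ((Finset.Icc 1 (m + 1)).erase i))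
          + ∑ j ∈ Finset.Icc (m + 2) d,
            xs ((Finset.Icc (m + 1) d).erase j) * ys (Finset.Icc 1 (m + 1))) := by
    intro k
    induction k with
    | zero =>
      intro _
      have : Finset.Icc 1 0 = (∅ : Finset ℕ) := by decide
      simp [hg0, this, hys]
    | succ k ih =>
      intro hk
      have hkd : k < d := hk
      have ihk := ih (le_of_lt hkd)
      rw [hgs k hkd, ihk]
      have h1 : Finset.Icc 1 k ∪ {k + 1} = Finset.Icc 1 (k + 1) := by
        ext a; simp [Finset.mem_Icc]; omega
      have h2 : ∀ t ∈ Finset.Icc 1 k,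
          (Finset.Icc 1 k).erase t ∪ {k + 1} = (Finset.Icc 1 (k + 1)).erase t := by
        intro t ht
        have ht' : t ≤ k := (Finset.mem_Icc.mp ht).2
        ext a; simp [Finset.mem_Icc, Finset.mem_erase]; omega
      have h3 : Finset.Icc (k + 1) d = insert (k + 1) (Finset.Icc (k + 2) d) := by
        ext a; simp [Finset.mem_Icc]; omega
      have h4 : (Finset.Icc (k + 1) d).erase (k + 1) = Finset.Icc (k + 2) d := by
        ext a; simp [Finset.mem_Icc, Finset.mem_erase]; omega
      have hnot : k + 1 ∉ Finset.Icc (k + 2) d := by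
        simp [Finset.mem_Icc]
      have hsplit : ∑ s ∈ Finset.Icc (k + 1) d,
            xs ((Finset.Icc (k + 1) d).erase s) * ys ((Finset.Icc 1 k) ∪ {k + 1})
          = xs (Finset.Icc (k + 2) d) * ys (Finset.Icc 1 (k + 1))
            + ∑ j ∈ Finset.Icc (k + 2) d,
                xs ((Finset.Icc (k + 1) d).erase j) * ys (Finset.Icc 1 (k + 1)) := by
        rw [h1]
        rw [h3, Finset.sum_insert hnot, ← h3, h4]
      have hT1 : ∑ t ∈ Finset.Icc 1 k,
            xs (Finset.Icc (k + 1) d) * ys (((Finset.Icc 1 k).erase t) ∪ {k + 1})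
          = ∑ i ∈ Finset.Icc 1 k,
            xs (Finset.Icc (k + 1) d) * ys ((Finset.Icc 1 (k + 1)).erase i) := by
        apply Finset.sum_congr rfl
        intro t ht
        rw [h2 t ht]
      rw [hsplit, hT1, Finset.sum_range_succ]
      ring
  have hfin := key d le_rfl
  have hempty : Finset.Icc (d + 1) d = (∅ : Finset ℕ) := by
    simp
  rw [hfin, hempty, hxs]
  simp
end

section
/- Let b = (b_1,...,b_d) be positive integers with ∑ b_i = 2β even, let ε = 1/(5β) and c = e_{[d+1]} + ε e_{d+2} ∈ ℝ^{d+2}. Then the vertex v of P_b corresponding to the pair ([d+1], d+2), namely v = e_{[d+1]} + α e_{d+2} with α = (β + 1/4 - β)/(β + 1/2), is the unique maximizer of the linear functional x ↦ c·x over P_b. -/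
set_option maxHeartbeats 1000000 in
/-- the vertex `v = e_{[d+1]} + α e_{d+2}` of `P_b`, with
`α = (β+1/4-β)/(β+1/2)`, is the unique maximizer over `P_b` of the linear
functional given by `c = e_{[d+1]} + ε e_{d+2}` where `ε = 1/(5β)`. -/
theorem unique_maximizer (d : ℕ) (hd : 1 ≤ d) (b : Fin d → ℤ) (hb : ∀ i, 0 < b i)
    (β : ℤ) (hβ : ∑ i, b i = 2 * β)
    (w : Fin (d + 2) → ℝ)
    (hw : ∀ i : Fin (d + 2), w i =
      if h : (i : ℕ) < d then (b ⟨i, h⟩ : ℝ)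
      else if (i : ℕ) = d then -(β : ℝ) else (β : ℝ) + 1/2)
    (P : Set (Fin (d + 2) → ℝ))
    (hP : P = {x | (∀ i, 0 ≤ x i ∧ x i ≤ 1) ∧ ∑ i, w i * x i ≤ (β : ℝ) + 1/4})
    (ε : ℝ) (hε : ε = 1 / (5 * (β : ℝ)))
    (c : Fin (d + 2) → ℝ) (hc : ∀ i, c i = if (i : ℕ) < d + 1 then 1 else ε)
    (α : ℝ) (hα : α = ((β : ℝ) + 1/4 - (β : ℝ)) / ((β : ℝ) + 1/2))
    (v : Fin (d + 2) → ℝ) (hv : ∀ i, v i = if (i : ℕ) < d + 1 then 1 else α) :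
    v ∈ P ∧ ∀ x ∈ P, x ≠ v → ∑ i, c i * x i < ∑ i, c i * v i := by
  have hdi : ∀ i : Fin d, (i : ℕ) < d + 2 := fun i => by omega
  have hd0 : d < d + 2 := by omega
  have hd1 : d + 1 < d + 2 := by omega
  have hβ1 : (1:ℤ) ≤ β := by
    have h1 : (d:ℤ) ≤ ∑ i, b i := by
      calc (d:ℤ) = ∑ _i : Fin d, 1 := by simp
        _ ≤ ∑ i, b i := Finset.sum_le_sum fun i _ => hb i
    have h2 : (1:ℤ) ≤ (d:ℤ) := by exact_mod_cast hd
    omega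
  have hB1 : (1:ℝ) ≤ (β:ℝ) := by exact_mod_cast hβ1
  have hBh : (0:ℝ) < (β:ℝ) + 1/2 := by linarith
  have hεpos : 0 < ε := by rw [hε]; positivity
  have hα4 : α * ((β:ℝ) + 1/2) = 1/4 := by
    rw [hα, div_mul_cancel₀ _ hBh.ne']; ring
  have hα0 : 0 < α := by
    rw [hα, show (β:ℝ) + 1/4 - (β:ℝ) = 1/4 by ring]
    positivity
  have hα1 : α < 1 := by
    rw [hα, show (β:ℝ) + 1/4 - (β:ℝ) = 1/4 by ring, div_lt_one hBh]; linarith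
  have hble : ∀ i, (b i : ℝ) ≤ 2 * (β:ℝ) := by
    intro i
    have h1 : b i ≤ ∑ j, b j :=
      Finset.single_le_sum (f := b) (fun j _ => (hb j).le) (Finset.mem_univ i)
    have h2 : b i ≤ 2 * β := by omega
    exact_mod_cast h2
  have hsumb : ∑ i : Fin d, (b i : ℝ) = 2 * (β:ℝ) := by exact_mod_cast hβ
  have hsplit : ∀ f : Fin (d+2) → ℝ, ∑ i, f i =
      (∑ i : Fin d, f ⟨i.1, hdi i⟩) + f ⟨d, hd0⟩ + f ⟨d+1, hd1⟩ := by
    intro f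
    rw [Fin.sum_univ_castSucc, Fin.sum_univ_castSucc]
    rfl
  have hw1 : ∀ i : Fin d, w ⟨i.1, hdi i⟩ = (b i : ℝ) := by
    intro i; rw [hw]; simp [i.2]
  have hw2 : w ⟨d, hd0⟩ = -(β:ℝ) := by rw [hw]; simp
  have hw3 : w ⟨d+1, hd1⟩ = (β:ℝ) + 1/2 := by
    rw [hw, dif_neg (show ¬(d+1 < d) by omega), if_neg (show ¬(d+1 = d) by omega)]
  have keyw : ∀ g : Fin (d+2) → ℝ, ∑ i, w i * g i =
      (∑ i : Fin d, (b i : ℝ) * g ⟨i.1, hdi i⟩) - (β:ℝ) * g ⟨d, hd0⟩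
        + ((β:ℝ) + 1/2) * g ⟨d+1, hd1⟩ := by
    intro g
    rw [hsplit fun i => w i * g i, hw2, hw3]
    have h1 : ∑ i : Fin d, w ⟨i.1, hdi i⟩ * g ⟨i.1, hdi i⟩
        = ∑ i : Fin d, (b i : ℝ) * g ⟨i.1, hdi i⟩ :=
      Finset.sum_congr rfl fun i _ => by rw [hw1]
    rw [h1]; ring
  have hc1 : ∀ i : Fin d, c ⟨i.1, hdi i⟩ = 1 := by
    intro i; rw [hc, if_pos (Nat.lt_succ_of_lt i.2)]
  have hc2 : c ⟨d, hd0⟩ = 1 := by rw [hc, if_pos (show d < d + 1 by omega)]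
  have hc3 : c ⟨d+1, hd1⟩ = ε := by rw [hc, if_neg (show ¬(d+1 < d+1) by omega)]
  have keyc : ∀ g : Fin (d+2) → ℝ, ∑ i, c i * g i =
      (∑ i : Fin d, g ⟨i.1, hdi i⟩) + g ⟨d, hd0⟩ + ε * g ⟨d+1, hd1⟩ := by
    intro g
    rw [hsplit fun i => c i * g i, hc2, hc3]
    have h1 : ∑ i : Fin d, c ⟨i.1, hdi i⟩ * g ⟨i.1, hdi i⟩
        = ∑ i : Fin d, g ⟨i.1, hdi i⟩ :=
      Finset.sum_congr rfl fun i _ => by rw [hc1, one_mul]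
    rw [h1]; ring
  have hv1 : ∀ i : Fin d, v ⟨i.1, hdi i⟩ = 1 := by
    intro i; rw [hv, if_pos (Nat.lt_succ_of_lt i.2)]
  have hv2 : v ⟨d, hd0⟩ = 1 := by rw [hv, if_pos (show d < d + 1 by omega)]
  have hv3 : v ⟨d+1, hd1⟩ = α := by rw [hv, if_neg (show ¬(d+1 < d+1) by omega)]
  have hvmem : v ∈ P := by
    rw [hP]
    refine ⟨fun i => ?_, ?_⟩
    · rw [hv]; split_ifs <;> constructor <;> linarith
    · rw [keyw v, hv2, hv3]
      have h1 : ∑ i : Fin d, (b i : ℝ) * v ⟨i.1, hdi i⟩ = 2 * (β:ℝ) := by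
        simp only [hv1, mul_one]; exact hsumb
      rw [h1]
      nlinarith [hα4]
  refine ⟨hvmem, ?_⟩
  intro x hx hxv
  rw [hP] at hx
  obtain ⟨hx01, hxcon⟩ := hx
  rw [keyw x] at hxcon
  rw [keyc x, keyc v, hv2, hv3]
  have hvs : ∑ i : Fin d, v ⟨i.1, hdi i⟩ = (d:ℝ) := by
    simp [hv1]
  rw [hvs]
  set S := ∑ i : Fin d, x ⟨i.1, hdi i⟩ with hS
  set Sb := ∑ i : Fin d, (b i : ℝ) * x ⟨i.1, hdi i⟩ with hSb
  set xd := x ⟨d, hd0⟩ with hxd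
  set xl := x ⟨d+1, hd1⟩ with hxl
  by_cases hall : (∀ i : Fin d, x ⟨i.1, hdi i⟩ = 1) ∧ xd = 1
  · obtain ⟨h1, h2⟩ := hall
    have hSb2 : Sb = 2 * (β:ℝ) := by
      rw [hSb]; simp only [h1, mul_one]; exact hsumb
    have hSd : S = (d:ℝ) := by rw [hS]; simp [h1]
    have hxlα : xl ≤ α := by nlinarith [hxcon, hα4, hBh]
    have hne : xl ≠ α := by
      intro he
      apply hxv
      funext j
      have hj2 := j.2
      rw [hv]
      by_cases hj : (j:ℕ) < d
      · rw [if_pos (show (j:ℕ) < d + 1 by omega)]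
        rw [show j = (⟨(⟨j.1, hj⟩ : Fin d).1, hdi ⟨j.1, hj⟩⟩ : Fin (d+2)) from Fin.ext rfl]
        exact h1 ⟨j.1, hj⟩
      · by_cases hj1 : (j:ℕ) < d + 1
        · rw [if_pos hj1, show j = (⟨d, hd0⟩ : Fin (d+2)) from Fin.ext (show (j:ℕ) = d by omega)]
          exact h2
        · rw [if_neg hj1,
            show j = (⟨d+1, hd1⟩ : Fin (d+2)) from Fin.ext (show (j:ℕ) = d + 1 by omega)]
          exact he
    have hlt : xl < α := lt_of_le_of_ne hxlα hne
    have hml := mul_lt_mul_of_pos_left hlt hεpos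
    rw [hSd]
    linarith
  · have hub : ∀ i : Fin d, ε * (b i : ℝ) ≤ 2/5 := by
      intro i
      rw [hε, div_mul_eq_mul_div, one_mul, div_le_div_iff₀ (by positivity) (by norm_num)]
      have := hble i; linarith
    have hcoef : ∀ i : Fin d, 0 ≤ (β:ℝ) + 1/2 - ε * (b i : ℝ) := by
      intro i; have := hub i; linarith
    have htermnn : ∀ i : Fin d, i ∈ Finset.univ →
        0 ≤ (1 - x ⟨i.1, hdi i⟩) * ((β:ℝ) + 1/2 - ε * (b i : ℝ)) := fun i _ =>
      mul_nonneg (by linarith [(hx01 ⟨i.1, hdi i⟩).2]) (hcoef i)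
    have hT0 : (0:ℝ) ≤ ∑ i : Fin d, (1 - x ⟨i.1, hdi i⟩) * ((β:ℝ) + 1/2 - ε * (b i : ℝ)) :=
      Finset.sum_nonneg htermnn
    have hTexp : ∑ i : Fin d, (1 - x ⟨i.1, hdi i⟩) * ((β:ℝ) + 1/2 - ε * (b i : ℝ))
        = (d:ℝ) * ((β:ℝ) + 1/2) - ((β:ℝ) + 1/2) * S - ε * (2 * (β:ℝ)) + ε * Sb := by
      have e1 : ∑ i : Fin d, (1 - x ⟨i.1, hdi i⟩) * ((β:ℝ) + 1/2 - ε * (b i : ℝ))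
          = ∑ i : Fin d, ((((β:ℝ) + 1/2) - ((β:ℝ) + 1/2) * x ⟨i.1, hdi i⟩
              - ε * (b i : ℝ)) + ε * ((b i : ℝ) * x ⟨i.1, hdi i⟩)) :=
        Finset.sum_congr rfl fun i _ => by ring
      rw [e1, Finset.sum_add_distrib, Finset.sum_sub_distrib, Finset.sum_sub_distrib,
        Finset.sum_const, ← Finset.mul_sum, ← Finset.mul_sum, ← Finset.mul_sum,
        hsumb, ← hS, ← hSb]
      simp only [Finset.card_univ, Fintype.card_fin, nsmul_eq_mul]
      try ring
    have hpos : 0 < (∑ i : Fin d, (1 - x ⟨i.1, hdi i⟩) * ((β:ℝ) + 1/2 - ε * (b i : ℝ)))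
        + (1 - xd) * ((β:ℝ) + 1/2 + ε * (β:ℝ)) := by
      have hxd1 : xd ≤ 1 := (hx01 ⟨d, hd0⟩).2
      rw [not_and_or] at hall
      rcases hall with h | h
      · push_neg at h
        obtain ⟨j, hj⟩ := h
        have hxj : x ⟨j.1, hdi j⟩ < 1 := lt_of_le_of_ne (hx01 ⟨j.1, hdi j⟩).2 hj
        have hTj : (1 - x ⟨j.1, hdi j⟩) * ((β:ℝ) + 1/2 - ε * (b j : ℝ))
            ≤ ∑ i : Fin d, (1 - x ⟨i.1, hdi i⟩) * ((β:ℝ) + 1/2 - ε * (b i : ℝ)) :=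
          Finset.single_le_sum
            (f := fun i : Fin d => (1 - x ⟨i.1, hdi i⟩) * ((β:ℝ) + 1/2 - ε * (b i : ℝ)))
            htermnn (Finset.mem_univ j)
        have hterm : 0 < (1 - x ⟨j.1, hdi j⟩) * ((β:ℝ) + 1/2 - ε * (b j : ℝ)) := by
          have := hub j
          apply mul_pos (by linarith) (by linarith)
        have hsec : 0 ≤ (1 - xd) * ((β:ℝ) + 1/2 + ε * (β:ℝ)) :=
          mul_nonneg (by linarith) (by nlinarith [hεpos])
        linarith
      · have hxdlt : xd < 1 := lt_of_le_of_ne hxd1 h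
        have hsec : 0 < (1 - xd) * ((β:ℝ) + 1/2 + ε * (β:ℝ)) :=
          mul_pos (by linarith) (by nlinarith [hεpos])
        linarith
    have hmul : ε * (Sb - (β:ℝ) * xd + ((β:ℝ) + 1/2) * xl) ≤ ε * ((β:ℝ) + 1/4) :=
      mul_le_mul_of_nonneg_left hxcon hεpos.le
    have hCα : ε * (α * ((β:ℝ) + 1/2)) = ε * (1/4) := by rw [hα4]
    have hkey : (∑ i : Fin d, (1 - x ⟨i.1, hdi i⟩) * ((β:ℝ) + 1/2 - ε * (b i : ℝ)))
        + (1 - xd) * ((β:ℝ) + 1/2 + ε * (β:ℝ))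
        ≤ ((β:ℝ) + 1/2) * ((d:ℝ) + 1 + ε * α - (S + xd + ε * xl)) := by
      rw [hTexp]
      nlinarith [hmul, hCα]
    have h2 : 0 < ((β:ℝ) + 1/2) * ((d:ℝ) + 1 + ε * α - (S + xd + ε * xl)) :=
      lt_of_lt_of_le hpos hkey
    nlinarith [h2, hBh]
end
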